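/- arXiv:1907.00672 — 7 statements merged into one kernel-verified Lean document; each statement's English description precedes it below -/
import Mathlib

section
/- Let α : S → S and let A be a component of the functional digraph D_α. Then exactly one of the following holds: (1) A contains a cycle (which is then the unique cycle in A) but contains no double ray and no right ray; (2) A contains a double ray but no cycle; (3) A contains a maximal right ray but no cycle and no double ray. -/
universe u

/-- A Cayley function: there is an associative binary operation `op` on `S` and an
element `a` such that `α x = op a x` for all `x`. -/
def IsCayley {S : Type u} (α : S → S) : Prop :=
  ∃ op : S → S → S, (∀ a b c : S, op (op a b) c = op a (op b c)) ∧
    ∃ a : S, ∀ x : S, α x = op a x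

/-- The stable image `sim α` of a function. -/
def stableImage {S : Type u} (α : S → S) : Set S :=
  {x | ∀ n : ℕ, x ∈ Set.range (α^[n])}

/-- `α` has stabilizer `s`: `s` is the smallest integer with `img α^s = img α^(s+1)`. -/
def HasStabilizer {S : Type u} (α : S → S) (s : ℕ) : Prop :=
  Set.range (α^[s]) = Set.range (α^[s + 1]) ∧
    ∀ t : ℕ, t < s → Set.range (α^[t]) ≠ Set.range (α^[t + 1])

/-- The component of the functional digraph `D_α` containing `x`. -/
def fComponent {S : Type u} (α : S → S) (x : S) : Set S :=
  {y | ∃ k m : ℕ, α^[k] y = α^[m] x}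

/-- `A` is a component of the functional digraph of `α`. -/
def IsComponent {S : Type u} (α : S → S) (A : Set S) : Prop :=
  ∃ x : S, A = fComponent α x

/-- A cycle of length `k ≥ 1` in `D_α`, given by the first `k` values of `x`. -/
def IsCycle {S : Type u} (α : S → S) (k : ℕ) (x : ℕ → S) : Prop :=
  1 ≤ k ∧ (∀ i < k, ∀ j < k, x i = x j → i = j) ∧ ∀ i < k, α (x i) = x ((i + 1) % k)

/-- A right ray in `D_α`. -/
def IsRightRay {S : Type u} (α : S → S) (x : ℕ → S) : Prop :=
  Function.Injective x ∧ ∀ n : ℕ, α (x n) = x (n + 1)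

/-- A maximal right ray: a right ray starting at an initial vertex. -/
def IsMaximalRightRay {S : Type u} (α : S → S) (x : ℕ → S) : Prop :=
  IsRightRay α x ∧ x 0 ∉ Set.range α

/-- A left ray in `D_α` (written `⟨… y₂ y₁ y₀]`). -/
def IsLeftRay {S : Type u} (α : S → S) (y : ℕ → S) : Prop :=
  Function.Injective y ∧ ∀ n : ℕ, α (y (n + 1)) = y n

/-- A double ray in `D_α`. -/
def IsDoubleRay {S : Type u} (α : S → S) (x : ℤ → S) : Prop :=
  Function.Injective x ∧ ∀ n : ℤ, α (x n) = x (n + 1)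

/-- A finite branch of length `m ≥ 1` of the subgraph with vertex set `T`:
a chain `[p 0, …, p m]` with `p 0` initial, `p m ∈ T`, `p (m-1) ∉ T`. -/
def IsFiniteBranchOf {S : Type u} (α : S → S) (T : Set S) (m : ℕ) (p : ℕ → S) : Prop :=
  1 ≤ m ∧ (∀ i ≤ m, ∀ j ≤ m, p i = p j → i = j) ∧ (∀ i < m, α (p i) = p (i + 1)) ∧
    p 0 ∉ Set.range α ∧ p m ∈ T ∧ p (m - 1) ∉ T

/-- An infinite branch of the subgraph with vertex set `T`: a left ray ending in `T`. -/
def IsInfiniteBranchOf {S : Type u} (α : S → S) (T : Set S) (y : ℕ → S) : Prop :=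
  IsLeftRay α y ∧ y 0 ∈ T ∧ y 1 ∉ T

/-- `A` contains a cycle of `D_α`. -/
def HasCycleIn {S : Type u} (α : S → S) (A : Set S) : Prop :=
  ∃ k x, IsCycle α k x ∧ ∀ i < k, x i ∈ A

/-- `A` contains a double ray of `D_α`. -/
def HasDoubleRayIn {S : Type u} (α : S → S) (A : Set S) : Prop :=
  ∃ x : ℤ → S, IsDoubleRay α x ∧ ∀ n : ℤ, x n ∈ A

/-- `A` contains a right ray of `D_α`. -/
def HasRightRayIn {S : Type u} (α : S → S) (A : Set S) : Prop :=
  ∃ x : ℕ → S, IsRightRay α x ∧ ∀ n : ℕ, x n ∈ A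

/-- `A` contains a maximal right ray of `D_α`. -/
def HasMaxRightRayIn {S : Type u} (α : S → S) (A : Set S) : Prop :=
  ∃ x : ℕ → S, IsMaximalRightRay α x ∧ ∀ n : ℕ, x n ∈ A

/-- All cycles contained in `A` have the same vertex set. -/
def UniqueCycleIn {S : Type u} (α : S → S) (A : Set S) : Prop :=
  ∀ k x k' x', IsCycle α k x → (∀ i < k, x i ∈ A) → IsCycle α k' x' →
    (∀ i < k', x' i ∈ A) → x '' Set.Iio k = x' '' Set.Iio k'

/-- Case (1): `A` has a (necessarily unique) cycle but no double ray and no right ray. -/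
def CompCase1 {S : Type u} (α : S → S) (A : Set S) : Prop :=
  HasCycleIn α A ∧ UniqueCycleIn α A ∧ ¬ HasDoubleRayIn α A ∧ ¬ HasRightRayIn α A

/-- Case (2): `A` has a double ray but no cycle. -/
def CompCase2 {S : Type u} (α : S → S) (A : Set S) : Prop :=
  HasDoubleRayIn α A ∧ ¬ HasCycleIn α A

/-- Case (3): `A` has a maximal right ray but no cycle and no double ray. -/
def CompCase3 {S : Type u} (α : S → S) (A : Set S) : Prop :=
  HasMaxRightRayIn α A ∧ ¬ HasCycleIn α A ∧ ¬ HasDoubleRayIn α A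

section Helpers

variable {S : Type u} {α : S → S}

lemma comp_closed {x₀ a : S} (ha : a ∈ fComponent α x₀) (n : ℕ) :
    α^[n] a ∈ fComponent α x₀ := by
  obtain ⟨k, m, h⟩ := ha
  refine ⟨k, n + m, ?_⟩
  calc α^[k] (α^[n] a) = α^[n] (α^[k] a) := by
        rw [← Function.iterate_add_apply, ← Function.iterate_add_apply, Nat.add_comm]
    _ = α^[n] (α^[m] x₀) := by rw [h]
    _ = α^[n + m] x₀ := (Function.iterate_add_apply α n m x₀).symm

lemma cycle_iter {k : ℕ} {x : ℕ → S} (hc : IsCycle α k x) :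
    ∀ n, ∀ i < k, α^[n] (x i) = x ((i + n) % k) := by
  intro n
  induction n with
  | zero => intro i hi; simp [Nat.mod_eq_of_lt hi]
  | succ n ih =>
    intro i hi
    have hk : 0 < k := hc.1
    have h3 : ((i + n) % k + 1) % k = (i + (n + 1)) % k := by
      rw [Nat.add_mod ((i + n) % k) 1 k, Nat.mod_mod_of_dvd _ (dvd_refl k), ← Nat.add_mod, Nat.add_assoc]
    rw [Function.iterate_succ_apply', ih i hi, hc.2.2 _ (Nat.mod_lt _ hk), h3]

lemma cycle_image_orbit {k : ℕ} {x : ℕ → S} (hc : IsCycle α k x) {i : ℕ} (hi : i < k) :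
    x '' Set.Iio k = Set.range (fun n => α^[n] (x i)) := by
  ext z
  constructor
  · rintro ⟨j, hj, rfl⟩
    have hj' : j < k := hj
    refine ⟨j + k - i, ?_⟩
    show α^[j + k - i] (x i) = x j
    rw [cycle_iter hc _ _ hi]
    congr 1
    have h1 : i + (j + k - i) = j + k := by omega
    rw [h1, Nat.add_mod_right, Nat.mod_eq_of_lt hj']
  · rintro ⟨n, rfl⟩
    show α^[n] (x i) ∈ x '' Set.Iio k
    rw [cycle_iter hc n i hi]
    exact ⟨(i + n) % k, Nat.mod_lt _ hc.1, rfl⟩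

lemma rr_iter {x : ℕ → S} (hx : ∀ n, α (x n) = x (n + 1)) :
    ∀ n, α^[n] (x 0) = x n := by
  intro n
  induction n with
  | zero => rfl
  | succ n ih => rw [Function.iterate_succ_apply', ih, hx]

lemma dr_to_rr {A : Set S} (h : HasDoubleRayIn α A) : HasRightRayIn α A := by
  obtain ⟨x, ⟨hinj, hstep⟩, hmem⟩ := h
  refine ⟨fun n => x n, ⟨?_, ?_⟩, fun n => hmem n⟩
  · intro a b hab
    have := hinj hab
    exact_mod_cast this
  · intro n
    have := hstep n
    simpa using this

lemma no_periodic {x₀ : S} (hnc : ¬ HasCycleIn α (fComponent α x₀))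
    {a : S} (ha : a ∈ fComponent α x₀) {p : ℕ} (hp : 1 ≤ p) : α^[p] a ≠ a := by
  intro hper
  apply hnc
  classical
  have hex : ∃ q, 1 ≤ q ∧ α^[q] a = a := ⟨p, hp, hper⟩
  obtain ⟨q, ⟨hq1, hqa⟩, hmin⟩ :
      ∃ q, (1 ≤ q ∧ α^[q] a = a) ∧ ∀ r < q, ¬(1 ≤ r ∧ α^[r] a = a) :=
    ⟨Nat.find hex, Nat.find_spec hex, fun r hr => Nat.find_min hex hr⟩
  have key : ∀ i j, i < j → j < q → α^[i] a ≠ α^[j] a := by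
    intro i j hij hjq heq
    have h1 : α^[q - j + i] a = a := by
      have h0 : α^[q - j] (α^[i] a) = α^[q - j] (α^[j] a) := by rw [heq]
      rw [← Function.iterate_add_apply, ← Function.iterate_add_apply] at h0
      have h2 : q - j + j = q := by omega
      rw [h2, hqa] at h0
      exact h0
    exact hmin (q - j + i) (by omega) ⟨by omega, h1⟩
  refine ⟨q, fun i => α^[i] a, ⟨hq1, ?_, ?_⟩, ?_⟩
  · intro i hi j hj hij
    by_contra hne
    rcases Nat.lt_or_ge i j with h | h
    · exact key i j h hj hij
    · have hji : j < i := by omega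
      exact key j i hji hi hij.symm
  · intro i hi
    show α (α^[i] a) = α^[(i + 1) % q] a
    rw [show α (α^[i] a) = α^[i + 1] a from (Function.iterate_succ_apply' α i a).symm]
    rcases Nat.lt_or_ge (i + 1) q with h | h
    · rw [Nat.mod_eq_of_lt h]
    · have h1 : i + 1 = q := by omega
      rw [h1, Nat.mod_self]
      exact hqa
  · intro i _
    exact comp_closed ha i

end Helpers

section Main

variable {S : Type u} {α : S → S}

lemma no_rightray_of_cycle {x₀ : S} (hcyc : HasCycleIn α (fComponent α x₀)) :
    ¬ HasRightRayIn α (fComponent α x₀) := by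
  rintro ⟨r, ⟨hrinj, hrstep⟩, hrA⟩
  obtain ⟨k, x, hc, hxA⟩ := hcyc
  obtain ⟨p, q, hpq⟩ := hrA 0
  obtain ⟨u, v, huv⟩ := hxA 0 hc.1
  have hcommon : α^[v + p] (r 0) = α^[q + u] (x 0) := by
    calc α^[v + p] (r 0) = α^[v] (α^[p] (r 0)) := Function.iterate_add_apply α v p (r 0)
      _ = α^[v] (α^[q] x₀) := by rw [hpq]
      _ = α^[v + q] x₀ := (Function.iterate_add_apply α v q x₀).symm
      _ = α^[q + v] x₀ := by rw [Nat.add_comm]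
      _ = α^[q] (α^[v] x₀) := Function.iterate_add_apply α q v x₀
      _ = α^[q] (α^[u] (x 0)) := by rw [huv]
      _ = α^[q + u] (x 0) := (Function.iterate_add_apply α q u (x 0)).symm
  have hmemC : ∀ m, r (m + (v + p)) ∈ x '' Set.Iio k := by
    intro m
    have h1 : r (m + (v + p)) = α^[m + (v + p)] (r 0) := (rr_iter hrstep _).symm
    rw [h1, Function.iterate_add_apply, hcommon, ← Function.iterate_add_apply,
      cycle_iter hc _ _ hc.1]
    exact ⟨_, Nat.mod_lt _ hc.1, rfl⟩
  have hfin : (x '' Set.Iio k).Finite := (Set.finite_Iio k).image x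
  have hinj2 : Function.Injective (fun m => r (m + (v + p))) := by
    intro a b h
    have := hrinj h
    omega
  have hsub : (Set.range fun m => r (m + (v + p))).Finite := by
    refine hfin.subset ?_
    rintro _ ⟨m, rfl⟩
    exact hmemC m
  exact (Set.infinite_range_of_injective hinj2) hsub

lemma unique_cycle {x₀ : S} : UniqueCycleIn α (fComponent α x₀) := by
  intro k x k' x' hc hxA hc' hx'A
  obtain ⟨p, q, hpq⟩ := hxA 0 hc.1
  obtain ⟨u, v, huv⟩ := hx'A 0 hc'.1
  have hcommon : α^[v + p] (x 0) = α^[q + u] (x' 0) := by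
    calc α^[v + p] (x 0) = α^[v] (α^[p] (x 0)) := Function.iterate_add_apply α v p (x 0)
      _ = α^[v] (α^[q] x₀) := by rw [hpq]
      _ = α^[v + q] x₀ := (Function.iterate_add_apply α v q x₀).symm
      _ = α^[q + v] x₀ := by rw [Nat.add_comm]
      _ = α^[q] (α^[v] x₀) := Function.iterate_add_apply α q v x₀
      _ = α^[q] (α^[u] (x' 0)) := by rw [huv]
      _ = α^[q + u] (x' 0) := (Function.iterate_add_apply α q u (x' 0)).symm
  have hi : (0 + (v + p)) % k < k := Nat.mod_lt _ hc.1
  have hj : (0 + (q + u)) % k' < k' := Nat.mod_lt _ hc'.1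
  have hxi : x ((0 + (v + p)) % k) = x' ((0 + (q + u)) % k') := by
    rw [← cycle_iter hc (v + p) 0 hc.1, ← cycle_iter hc' (q + u) 0 hc'.1]
    exact hcommon
  rw [cycle_image_orbit hc hi, cycle_image_orbit hc' hj, hxi]

lemma maxrr_of_no_cycle_no_dr {x₀ : S} (hnc : ¬ HasCycleIn α (fComponent α x₀))
    (hnd : ¬ HasDoubleRayIn α (fComponent α x₀)) :
    HasMaxRightRayIn α (fComponent α x₀) := by
  classical
  by_cases hinit : ∃ y, (∃ n, α^[n] y = x₀) ∧ y ∉ Set.range α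
  · obtain ⟨y, ⟨n, hyn⟩, hy⟩ := hinit
    have hyA : y ∈ fComponent α x₀ := ⟨n, 0, by simpa using hyn⟩
    have key : ∀ a b : ℕ, a < b → α^[a] y ≠ α^[b] y := by
      intro a b hlt heq
      have haA : α^[a] y ∈ fComponent α x₀ := comp_closed hyA a
      have h1 : α^[b - a] (α^[a] y) = α^[a] y := by
        rw [← Function.iterate_add_apply]
        have h2 : b - a + a = b := by omega
        rw [h2]
        exact heq.symm
      exact no_periodic hnc haA (by omega) h1
    refine ⟨fun m => α^[m] y, ⟨⟨?_, ?_⟩, ?_⟩, ?_⟩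
    · intro a b hab
      by_contra hne
      rcases Nat.lt_or_ge a b with h | h
      · exact key a b h hab
      · exact key b a (by omega) hab.symm
    · intro m
      exact (Function.iterate_succ_apply' α m y).symm
    · simpa using hy
    · intro m
      exact comp_closed hyA m
  · push_neg at hinit
    exfalso
    apply hnd
    have key : ∀ z : {y // ∃ n, α^[n] y = x₀}, ∃ w : {y // ∃ n, α^[n] y = x₀}, α w.1 = z.1 := by
      rintro ⟨z, n, hz⟩
      obtain ⟨w, hw⟩ := hinit z ⟨n, hz⟩
      exact ⟨⟨w, n + 1, by rw [Function.iterate_succ_apply, hw]; exact hz⟩, hw⟩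
    choose f hf using key
    set g : ℕ → {y // ∃ n, α^[n] y = x₀} := fun n => f^[n] ⟨x₀, 0, rfl⟩ with hg
    have hgstep : ∀ n, α (g (n + 1)).1 = (g n).1 := by
      intro n
      have h1 : g (n + 1) = f (g n) := Function.iterate_succ_apply' f n _
      rw [h1]
      exact hf (g n)
    have hgit : ∀ n, α^[n] (g n).1 = x₀ := by
      intro n
      induction n with
      | zero => rfl
      | succ n ih =>
        rw [Function.iterate_succ_apply, hgstep n]
        exact ih
    have hx0A : x₀ ∈ fComponent α x₀ := ⟨0, 0, rfl⟩
    set d : ℤ → S := fun n => if 0 ≤ n then α^[n.toNat] x₀ else (g (-n).toNat).1 with hd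
    have hdpos : ∀ n : ℤ, 0 ≤ n → d n = α^[n.toNat] x₀ := by
      intro n hn
      simp only [hd]
      rw [if_pos hn]
    have hdneg : ∀ n : ℤ, n < 0 → d n = (g (-n).toNat).1 := by
      intro n hn
      simp only [hd]
      rw [if_neg (by omega)]
    have key2 : ∀ a b : ℤ, a < b → d a ≠ d b := by
      intro a b hlt heq
      rcases le_or_gt 0 a with ha | ha
      · have hb : (0:ℤ) ≤ b := by omega
        rw [hdpos a ha, hdpos b hb] at heq
        have h1 : α^[b.toNat - a.toNat] (α^[a.toNat] x₀) = α^[a.toNat] x₀ := by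
          rw [← Function.iterate_add_apply]
          have h2 : b.toNat - a.toNat + a.toNat = b.toNat := by omega
          rw [h2]
          exact heq.symm
        exact no_periodic hnc (comp_closed hx0A _) (by omega) h1
      · rcases le_or_gt 0 b with hb | hb
        · rw [hdneg a ha, hdpos b hb] at heq
          have h1 : α^[(-a).toNat + b.toNat] x₀ = x₀ := by
            calc α^[(-a).toNat + b.toNat] x₀
                = α^[(-a).toNat] (α^[b.toNat] x₀) := Function.iterate_add_apply α _ _ x₀
              _ = α^[(-a).toNat] ((g (-a).toNat).1) := by rw [← heq]
              _ = x₀ := hgit _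
          exact no_periodic hnc hx0A (by omega) h1
        · rw [hdneg a ha, hdneg b hb] at heq
          have hpq : (-b).toNat < (-a).toNat := by omega
          have h1 : α^[(-a).toNat - (-b).toNat] x₀ = x₀ := by
            have e2 : α^[(-a).toNat] (g (-b).toNat).1 = x₀ := by
              rw [← heq]
              exact hgit _
            have e3 : α^[(-a).toNat] (g (-b).toNat).1
                = α^[(-a).toNat - (-b).toNat] x₀ := by
              rw [show (-a).toNat = ((-a).toNat - (-b).toNat) + (-b).toNat by omega,
                Function.iterate_add_apply, hgit]
              congr 1
              omega
            rw [← e3]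
            exact e2
          exact no_periodic hnc hx0A (by omega) h1
    refine ⟨d, ⟨?_, ?_⟩, ?_⟩
    · intro a b hab
      by_contra hne
      rcases lt_trichotomy a b with h | h | h
      · exact key2 a b h hab
      · exact hne h
      · exact key2 b a h hab.symm
    · intro n
      rcases le_or_gt 0 n with hn | hn
      · rw [hdpos n hn, hdpos (n + 1) (by omega)]
        have h1 : (n + 1).toNat = n.toNat + 1 := by omega
        rw [h1]
        exact (Function.iterate_succ_apply' α _ x₀).symm
      · rw [hdneg n hn]
        rcases le_or_gt 0 (n + 1) with hn1 | hn1
        · have h1 : (-n).toNat = 1 := by omega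
          rw [h1, hgstep 0, hdpos (n + 1) hn1]
          have h2 : (n + 1).toNat = 0 := by omega
          rw [h2]
          rfl
        · rw [hdneg (n + 1) hn1]
          have h2 : (-n).toNat = (-(n + 1)).toNat + 1 := by omega
          rw [h2]
          exact hgstep _
    · intro n
      rcases le_or_gt 0 n with hn | hn
      · rw [hdpos n hn]
        exact comp_closed hx0A _
      · rw [hdneg n hn]
        exact ⟨(-n).toNat, 0, by simpa using hgit _⟩

end Main

/-- For every component of a functional digraph exactly one of the three cases holds. -/
theorem component_trichotomy {S : Type u} (α : S → S) (A : Set S)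
    (hA : IsComponent α A) :
    (CompCase1 α A ∧ ¬ CompCase2 α A ∧ ¬ CompCase3 α A) ∨
    (¬ CompCase1 α A ∧ CompCase2 α A ∧ ¬ CompCase3 α A) ∨
    (¬ CompCase1 α A ∧ ¬ CompCase2 α A ∧ CompCase3 α A) := by
  obtain ⟨x₀, rfl⟩ := hA
  by_cases hcyc : HasCycleIn α (fComponent α x₀)
  · left
    have hnr := no_rightray_of_cycle hcyc
    have hnd : ¬ HasDoubleRayIn α (fComponent α x₀) := fun h => hnr (dr_to_rr h)
    exact ⟨⟨hcyc, unique_cycle, hnd, hnr⟩, fun h => h.2 hcyc, fun h => h.2.1 hcyc⟩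
  · by_cases hdr : HasDoubleRayIn α (fComponent α x₀)
    · exact Or.inr (Or.inl ⟨fun h => hcyc h.1, ⟨hdr, hcyc⟩, fun h => h.2.2 hdr⟩)
    · exact Or.inr (Or.inr ⟨fun h => hcyc h.1, fun h => hdr h.1,
        maxrr_of_no_cycle_no_dr hcyc hdr, hcyc, hdr⟩)
end

section
/- Let α : S → S be such that the functional digraph D_α has a component of type rro. Then α is a Cayley function if and only if D_α has a component of type rro such that: (a) it is the join of a maximal right ray R = [x_0 x_1 x_2 …⟩ and its finite branches, i.e., every vertex of the component lies on R or on a finite branch of R; and (b) for every i ≥ 1, every finite branch [y_0 y_1 … y_m = x_i] of R ending at x_i has length m ≤ i. -/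
universe u

/-- `A` is a component of type rro: it contains a maximal right ray but no cycle
and no double ray. -/
def IsRroComponent {S : Type u} (α : S → S) (A : Set S) : Prop :=
  IsComponent α A ∧ HasMaxRightRayIn α A ∧ ¬ HasCycleIn α A ∧ ¬ HasDoubleRayIn α A


namespace CayleyAux

variable {S : Type u} {α : S → S}

theorem fc_self (b : S) : b ∈ fComponent α b := ⟨0, 0, rfl⟩

theorem fc_iter {b u : S} (h : u ∈ fComponent α b) (j : ℕ) :
    α^[j] u ∈ fComponent α b := by
  obtain ⟨k, m, hkm⟩ := h
  refine ⟨k, j + m, ?_⟩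
  have : α^[k] (α^[j] u) = α^[j] (α^[k] u) := by
    rw [← Function.iterate_add_apply, ← Function.iterate_add_apply, Nat.add_comm]
  rw [this, hkm, ← Function.iterate_add_apply]

theorem fc_of_iter {b u : S} {j : ℕ} (h : α^[j] u ∈ fComponent α b) :
    u ∈ fComponent α b := by
  obtain ⟨k, m, hkm⟩ := h
  exact ⟨k + j, m, by rw [Function.iterate_add_apply, hkm]⟩

theorem fc_connect {b u v : S} (hu : u ∈ fComponent α b) (hv : v ∈ fComponent α b) :
    ∃ k m : ℕ, α^[k] u = α^[m] v := by
  obtain ⟨k₁, m₁, h₁⟩ := hu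
  obtain ⟨k₂, m₂, h₂⟩ := hv
  refine ⟨m₂ + k₁, m₁ + k₂, ?_⟩
  have e1 : α^[m₂ + k₁] u = α^[m₂ + m₁] b := by
    rw [Function.iterate_add_apply, h₁, ← Function.iterate_add_apply]
  have e2 : α^[m₁ + k₂] v = α^[m₁ + m₂] b := by
    rw [Function.iterate_add_apply, h₂, ← Function.iterate_add_apply]
  rw [e1, e2, Nat.add_comm]

/-- iterate along a ℤ-indexed chain -/
theorem zchain_iter {Y : ℤ → S} (hY : ∀ t, α (Y t) = Y (t + 1)) (j : ℕ) (t : ℤ) :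
    α^[j] (Y t) = Y (t + j) := by
  induction j generalizing t with
  | zero => simp
  | succ n ih =>
      rw [Function.iterate_succ_apply, hY, ih]
      congr 1
      push_cast
      ring

/-- iterate along an ℕ-indexed chain -/
theorem nchain_iter {Y : ℕ → S} (hY : ∀ t, α (Y t) = Y (t + 1)) (j t : ℕ) :
    α^[j] (Y t) = Y (t + j) := by
  induction j generalizing t with
  | zero => simp
  | succ n ih =>
      rw [Function.iterate_succ_apply, hY, ih]
      congr 1
      omega

/-- chain along a finite branch -/
theorem branch_iter {m : ℕ} {p : ℕ → S} (hch : ∀ i < m, α (p i) = p (i + 1))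
    {i j : ℕ} (hij : i + j ≤ m) : α^[j] (p i) = p (i + j) := by
  induction j with
  | zero => simp
  | succ n ih =>
      rw [Function.iterate_succ_apply', ih (by omega), hch (i + n) (by omega)]
      congr 1

theorem cycle_periodic {k : ℕ} {x : ℕ → S} (h : IsCycle α k x) : α^[k] (x 0) = x 0 := by
  obtain ⟨hk, _, hstep⟩ := h
  have key : ∀ j, j < k → α^[j] (x 0) = x j := by
    intro j hj
    induction j with
    | zero => simp
    | succ n ih =>
        rw [Function.iterate_succ_apply', ih (by omega), hstep n (by omega),
          Nat.mod_eq_of_lt (by omega)]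
  have : k - 1 < k := by omega
  conv_lhs => rw [show k = (k-1) + 1 by omega]
  rw [Function.iterate_succ_apply', key _ this, hstep _ this,
    show k - 1 + 1 = k by omega, Nat.mod_self]

end CayleyAux

namespace CayleyAux

variable {S : Type u} {α : S → S}

theorem reverse_dir {A : Set S} (hcomp : IsComponent α A) {x : ℕ → S}
    (hray : IsMaximalRightRay α x) (hmem : ∀ n, x n ∈ A)
    (hcover : ∀ a ∈ A, (∃ n : ℕ, a = x n) ∨
      ∃ (m : ℕ) (p : ℕ → S), IsFiniteBranchOf α (Set.range x) m p ∧ ∃ i ≤ m, a = p i)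
    (hbnd : ∀ i : ℕ, 1 ≤ i → ∀ (m : ℕ) (p : ℕ → S),
      IsFiniteBranchOf α (Set.range x) m p → p m = x i → m ≤ i) :
    IsCayley α := by
  classical
  obtain ⟨⟨hxinj, hxstep⟩, hxinit⟩ := hray
  obtain ⟨z, hAz⟩ := hcomp
  -- iterating along the ray
  have hx : ∀ n j : ℕ, α^[j] (x n) = x (n + j) := fun n j => nchain_iter hxstep j n
  -- every element of A reaches the ray
  have reach : ∀ u ∈ A, ∃ k n : ℕ, α^[k] u = x n := by
    intro u hu
    rw [hAz] at hu
    have h0 : x 0 ∈ fComponent α z := by rw [← hAz]; exact hmem 0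
    obtain ⟨k, m, hkm⟩ := fc_connect hu h0
    exact ⟨k, 0 + m, by rw [hkm, ← hx]⟩
  -- the key bound coming from (a) and (b)
  have kle : ∀ u ∈ A, ∀ k n : ℕ, α^[k] u = x n → k ≤ n := by
    intro u hu k n hkn
    rcases hcover u hu with ⟨j, rfl⟩ | ⟨m, p, hbr, i, him, rfl⟩
    · rw [hx] at hkn
      have := hxinj hkn
      omega
    · obtain ⟨hm1, hpinj, hch, hp0, hpm, hpm1⟩ := hbr
      obtain ⟨t, ht⟩ := id hpm
      have ht1 : 1 ≤ t := by
        rcases Nat.eq_zero_or_pos t with h0 | h1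
        · exfalso
          apply hxinit
          refine ⟨p (m - 1), ?_⟩
          have := hch (m - 1) (by omega)
          rw [show m - 1 + 1 = m by omega] at this
          rw [this, ← ht, h0]
        · exact h1
      have hbm : m ≤ t := hbnd t ht1 m p ⟨hm1, hpinj, hch, hp0, hpm, hpm1⟩ ht.symm
      have him2 : α^[m - i] (p i) = x t := by
        rw [branch_iter hch (by omega : i + (m - i) ≤ m), show i + (m - i) = m by omega, ← ht]
      -- cross the two equations
      have e1 : α^[(m - i) + k] (p i) = x (n + (m - i)) := by
        rw [Function.iterate_add_apply, hkn, hx]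
      have e2 : α^[k + (m - i)] (p i) = x (t + k) := by
        rw [Function.iterate_add_apply, him2, hx]
      rw [Nat.add_comm (m - i) k] at e1
      have := hxinj (e1.symm.trans e2)
      omega
  -- existence of labels
  have exists_lbl : ∀ u ∈ A, ∃ d : ℕ, ∀ k n : ℕ, α^[k] u = x n → n = k + d := by
    intro u hu
    obtain ⟨k₀, n₀, h₀⟩ := reach u hu
    have hk₀ : k₀ ≤ n₀ := kle u hu k₀ n₀ h₀
    refine ⟨n₀ - k₀, fun k n hkn => ?_⟩
    have e1 : α^[k₀ + k] u = x (n + k₀) := by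
      rw [Function.iterate_add_apply, hkn, hx]
    have e2 : α^[k + k₀] u = x (n₀ + k) := by
      rw [Function.iterate_add_apply, h₀, hx]
    rw [Nat.add_comm k₀ k] at e1
    have := hxinj (e1.symm.trans e2)
    omega
  choose! d hd using exists_lbl
  -- label of x 1
  have hd1 : d (x 1) = 1 := by
    have := hd (x 1) (hmem 1) 0 1 rfl
    omega
  -- labels shift under iteration
  have dstep : ∀ u ∈ A, ∀ j : ℕ, d (α^[j] u) = d u + j := by
    intro u hu j
    obtain ⟨k₀, n₀, h₀⟩ := reach u hu
    have h1 : n₀ = k₀ + d u := hd u hu k₀ n₀ h₀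
    have hmem' : α^[j] u ∈ A := by
      rw [hAz] at hu ⊢
      exact fc_iter hu j
    have h2 : α^[k₀] (α^[j] u) = x (n₀ + j) := by
      rw [← Function.iterate_add_apply, Nat.add_comm k₀ j, Function.iterate_add_apply,
        h₀, hx]
    have := hd (α^[j] u) hmem' k₀ (n₀ + j) h2
    omega
  have memiter : ∀ (u : S) (j : ℕ), α^[j] u ∈ A → u ∈ A := by
    intro u j hu
    rw [hAz] at hu ⊢
    exact fc_of_iter hu
  refine ⟨fun u v => if u ∈ A then α^[d u] v else u, ?_, x 1, ?_⟩
  · intro u v w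
    by_cases hu : u ∈ A
    · by_cases hv : v ∈ A
      · have hin : α^[d u] v ∈ A := by
          rw [hAz] at hv ⊢
          exact fc_iter hv (d u)
        simp only [if_pos hu, if_pos hv, if_pos hin, dstep v hv (d u)]
        rw [← Function.iterate_add_apply, Nat.add_comm]
      · have hout : α^[d u] v ∉ A := fun hc => hv (memiter v (d u) hc)
        simp only [if_pos hu, if_neg hv, if_neg hout]
    · simp only [if_neg hu]
  · intro v
    simp only [if_pos (hmem 1), hd1]
    rfl

end CayleyAux

namespace CayleyAux

variable {S : Type u} {α : S → S}

theorem itercomm (k j : ℕ) (u : S) : α^[k] (α^[j] u) = α^[j] (α^[k] u) := by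
  rw [← Function.iterate_add_apply, ← Function.iterate_add_apply, Nat.add_comm]

theorem forward_dir (hC : IsCayley α) (h : ∃ A : Set S, IsRroComponent α A) :
    ∃ A : Set S, IsRroComponent α A ∧ ∃ x : ℕ → S,
      IsMaximalRightRay α x ∧ (∀ n : ℕ, x n ∈ A) ∧
      (∀ a ∈ A, (∃ n : ℕ, a = x n) ∨
        ∃ (m : ℕ) (p : ℕ → S), IsFiniteBranchOf α (Set.range x) m p ∧ ∃ i ≤ m, a = p i) ∧
      (∀ i : ℕ, 1 ≤ i → ∀ (m : ℕ) (p : ℕ → S),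
        IsFiniteBranchOf α (Set.range x) m p → p m = x i → m ≤ i) := by
  classical
  obtain ⟨op, hassoc, a, ha⟩ := hC
  obtain ⟨A, ⟨z, hAz⟩, ⟨r, ⟨⟨hrinj, hrstep⟩, hrinit⟩, hrA⟩, hnoAcyc, hnoAdbl⟩ := h
  have hr : ∀ n j : ℕ, α^[j] (r n) = r (n + j) := fun n j => nchain_iter hrstep j n
  -- powers of `a` act as iterates of `α`
  have F1 : ∀ (n : ℕ) (v : S), α^[n + 1] v = op (α^[n] a) v := by
    intro n
    induction n with
    | zero => intro v; simpa using ha v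
    | succ n ih =>
        intro v
        rw [Function.iterate_succ_apply', ih v, ha, ← hassoc, ← ha,
          ← Function.iterate_succ_apply' α n a]
  -- right translations commute with α
  have F3 : ∀ (t : ℕ) (u v : S), α^[t] (op u v) = op (α^[t] u) v := by
    intro t
    induction t with
    | zero => intro u v; rfl
    | succ t ih =>
        intro u v
        rw [Function.iterate_succ_apply', ih, ha, ← hassoc, ← ha,
          ← Function.iterate_succ_apply' α t u]
  -- powers of `a` are pairwise distinct
  have hpw : ∀ i j : ℕ, α^[i] a = α^[j] a → i = j := by
    intro i j hij
    have e : ∀ n : ℕ, r (n + 1) = op (α^[n] a) (r 0) := by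
      intro n
      rw [← F1, hr]
      congr 1
      omega
    have : r (i + 1) = r (j + 1) := by rw [e, e, hij]
    have := hrinj this
    omega
  -- no periodic points in the component of `a`
  have noperB : ∀ v ∈ fComponent α a, ∀ p : ℕ, 1 ≤ p → α^[p] v ≠ v := by
    intro v hv p hp hper
    obtain ⟨k, m, hkm⟩ := hv
    have : α^[m + p] a = α^[m] a := by
      rw [Nat.add_comm, Function.iterate_add_apply, ← hkm, ← Function.iterate_add_apply,
        Nat.add_comm, Function.iterate_add_apply, hper, hkm]
    have := hpw _ _ this
    omega
  -- the component of `a` contains no double ray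
  have NoDblB : ¬ HasDoubleRayIn α (fComponent α a) := by
    rintro ⟨zr, ⟨hzinj, hzstep⟩, hzmem⟩
    obtain ⟨k, m, hkm⟩ := hzmem 0
    have hzk : zr (k : ℤ) = α^[m] a := by
      rw [← hkm, zchain_iter hzstep k 0, zero_add]
    set y : ℤ → S := fun t => op (zr t) (r 0) with hy
    have hystep : ∀ t, α (y t) = y (t + 1) := by
      intro t
      simp only [hy]
      rw [ha, ← hassoc, ← ha, hzstep]
    have yIter : ∀ (j : ℕ) (t : ℤ), α^[j] (y t) = y (t + j) := zchain_iter hystep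
    have anchor : y (k : ℤ) = r (m + 1) := by
      simp only [hy]
      rw [hzk, ← F1, hr, zero_add]
    -- labels of y relative to the ray r
    have ylabel : ∀ t : ℤ, ∃ K N : ℕ, α^[K] (y t) = r N ∧ (N : ℤ) - K = (m : ℤ) + 1 - k + t := by
      intro t
      rcases le_or_gt t (k : ℤ) with hle | hlt
      · refine ⟨(k - t).toNat, m + 1, ?_, ?_⟩
        · rw [yIter, show t + ((k - t).toNat : ℤ) = (k : ℤ) by omega, anchor]
        · omega
      · refine ⟨0, m + 1 + (t - k).toNat, ?_, ?_⟩
        · have : y t = α^[(t - (k : ℤ)).toNat] (y (k : ℤ)) := by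
            rw [yIter, show (k : ℤ) + ((t - k).toNat : ℤ) = t by omega]
          rw [Function.iterate_zero_apply, this, anchor, hr]
        · omega
    have ymem : ∀ t : ℤ, y t ∈ A := by
      intro t
      obtain ⟨K, N, hKN, _⟩ := ylabel t
      have hrN : r N ∈ fComponent α z := by rw [← hAz]; exact hrA N
      rw [hAz]
      exact fc_of_iter (by rw [hKN]; exact hrN)
    have yinj : Function.Injective y := by
      intro t t' htt
      obtain ⟨K, N, hKN, hL⟩ := ylabel t
      obtain ⟨K', N', hKN', hL'⟩ := ylabel t'
      have e1 : α^[K'] (α^[K] (y t)) = r (N + K') := by rw [hKN, hr]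
      have e2 : α^[K] (α^[K'] (y t')) = r (N' + K) := by rw [hKN', hr]
      rw [itercomm, htt] at e1
      have := hrinj (e1.symm.trans e2)
      omega
    exact hnoAdbl ⟨y, ⟨yinj, hystep⟩, ymem⟩
  -- infinite ascent with step `c` in the component of `a` is impossible
  have ASC : ∀ c : ℕ, 1 ≤ c → ∀ w : ℕ → S,
      (∀ j : ℕ, α^[c] (w (j + 1)) = w j) → w 0 ∈ fComponent α a → False := by
    intro c hc w hw hw0
    have W : ∀ j dd : ℕ, α^[c * dd] (w (j + dd)) = w j := by
      intro j dd
      induction dd with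
      | zero => simp
      | succ n ih =>
          rw [show c * (n + 1) = c * n + c by ring, Function.iterate_add_apply,
            show j + (n + 1) = (j + n) + 1 by omega, hw, ih]
    set D : ℤ → S := fun t => α^[((c * (-t).toNat : ℤ) + t).toNat] (w ((-t).toNat)) with hD
    have hnn : ∀ t : ℤ, 0 ≤ (c * (-t).toNat : ℤ) + t := by
      intro t
      have h1 : (-t).toNat ≤ c * (-t).toNat := Nat.le_mul_of_pos_left _ hc
      omega
    have Dalt : ∀ (t : ℤ) (j : ℕ), -t ≤ (j : ℤ) →
        D t = α^[((c * j : ℤ) + t).toNat] (w j) := by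
      intro t j hj
      have hj₀ : (-t).toNat ≤ j := by omega
      have hcw : w ((-t).toNat) = α^[c * (j - (-t).toNat)] (w j) := by
        rw [← W ((-t).toNat) (j - (-t).toNat), show (-t).toNat + (j - (-t).toNat) = j by omega]
      have hmulN : c * j = c * (-t).toNat + c * (j - (-t).toNat) := by
        rw [← Nat.mul_add]
        congr 1
        omega
      have hmul : (c : ℤ) * (j : ℤ)
          = (c : ℤ) * (((-t).toNat : ℕ) : ℤ) + ((c * (j - (-t).toNat) : ℕ) : ℤ) := by
        exact_mod_cast congrArg (Nat.cast : ℕ → ℤ) hmulN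
      simp only [hD]
      rw [hcw, ← Function.iterate_add_apply]
      congr 1
      have := hnn t
      omega
    have Dstep : ∀ t, α (D t) = D (t + 1) := by
      intro t
      have h1 : D t = α^[((c * (-t).toNat : ℤ) + t).toNat] (w ((-t).toNat)) := rfl
      have h2 : D (t + 1) = α^[((c * (-t).toNat : ℤ) + t + 1).toNat] (w ((-t).toNat)) := by
        rw [Dalt (t + 1) (-t).toNat (by omega)]
        congr 2
        omega
      rw [h1, h2, show ((c * (-t).toNat : ℤ) + t + 1).toNat
        = ((c * (-t).toNat : ℤ) + t).toNat + 1 by have := hnn t; omega,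
        Function.iterate_succ_apply']
    have Dmem : ∀ t : ℤ, D t ∈ fComponent α a := by
      intro t
      have hW := W 0 ((-t).toNat)
      rw [Nat.zero_add] at hW
      have hwj : w ((-t).toNat) ∈ fComponent α a :=
        fc_of_iter (show α^[c * (-t).toNat] (w ((-t).toNat)) ∈ fComponent α a by
          rw [hW]; exact hw0)
      exact fc_iter hwj _
    have Dinj : Function.Injective D := by
      have key : ∀ t t' : ℤ, t < t' → D t ≠ D t' := by
        intro t t' htt heq
        have : α^[(t' - t).toNat] (D t) = D t' := by
          rw [zchain_iter Dstep, show t + ((t' - t).toNat : ℤ) = t' by omega]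
        rw [← heq] at this
        exact noperB (D t) (Dmem t) _ (by omega) this
      intro t t' heq
      rcases lt_trichotomy t t' with hlt | he | hgt
      · exact absurd heq (key t t' hlt)
      · exact he
      · exact absurd heq.symm (key t' t hgt)
    exact NoDblB ⟨D, ⟨Dinj, Dstep⟩, Dmem⟩
  -- every element of the component of `a` has an initial ancestor
  have InitAnc : ∀ u ∈ fComponent α a, ∃ (q : S) (j : ℕ),
      α^[j] q = u ∧ q ∉ Set.range α := by
    intro u hu
    by_contra hno
    push_neg at hno
    have hstep : ∀ v : {v : S // ∃ j : ℕ, α^[j] v = u},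
        ∃ v' : {v : S // ∃ j : ℕ, α^[j] v = u}, α v'.1 = v.1 := by
      rintro ⟨v, j, hj⟩
      obtain ⟨v', hv'⟩ := hno v j hj
      refine ⟨⟨v', j + 1, ?_⟩, hv'⟩
      rw [Function.iterate_succ_apply, hv', hj]
    choose f hf using hstep
    set w : ℕ → S := fun j => (f^[j] ⟨u, 0, rfl⟩).1 with hwdef
    have hwstep : ∀ j : ℕ, α^[1] (w (j + 1)) = w j := by
      intro j
      simp only [hwdef, Function.iterate_one, Function.iterate_succ_apply']
      exact hf _
    exact ASC 1 le_rfl w hwstep (by simpa [hwdef] using hu)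
  -- lower bound for labels in the component of `a`
  have LowBnd : ∀ u ∈ fComponent α a, ∀ k m : ℕ, α^[k] u = α^[m] a → k ≤ m + 1 := by
    intro u hu k m hkm
    by_contra hgt
    push_neg at hgt
    set c := k - m - 1 with hcdef
    have hc : 1 ≤ c := by omega
    have hPQ : α^[m] a = op (α^[c + m] a) u := by
      rw [← F1, show c + m + 1 = k by omega, hkm]
    set w : ℕ → S := fun j => Nat.rec (α^[m] a) (fun _ prev => op prev u) j with hwdef
    have hw0 : w 0 = α^[m] a := rfl
    have hwsucc : ∀ j, w (j + 1) = op (w j) u := fun j => rfl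
    have hwstep : ∀ j : ℕ, α^[c] (w (j + 1)) = w j := by
      intro j
      induction j with
      | zero =>
          rw [hwsucc, hw0, F3, ← Function.iterate_add_apply, ← hPQ]
      | succ n ih =>
          rw [hwsucc, F3, ih, ← hwsucc]
    exact ASC c hc w hwstep (by rw [hw0]; exact fc_iter (fc_self a) m)
  -- the set of shifted labels `m + 1 - k` is a nonempty set of naturals
  have hex : ∃ n : ℕ, ∃ u : S, ∃ k m : ℕ, u ∈ fComponent α a ∧ α^[k] u = α^[m] a ∧
      k + n = m + 1 := ⟨1, a, 0, 0, fc_self a, rfl, rfl⟩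
  set μ := Nat.find hex with hμdef
  obtain ⟨us, ks, ms, husmem, huseq, huscnt⟩ := Nat.find_spec hex
  have hmin : ∀ n : ℕ, (∃ u : S, ∃ k m : ℕ, u ∈ fComponent α a ∧ α^[k] u = α^[m] a ∧
      k + n = m + 1) → μ ≤ n := fun n hn => Nat.find_min' hex hn
  -- an initial ancestor of the minimizer
  obtain ⟨q₀, j₀, hq₀u, hq₀init⟩ := InitAnc us husmem
  have hq₀mem : q₀ ∈ fComponent α a := fc_of_iter (by rw [hq₀u]; exact husmem)
  have hq₀eq : α^[ks + j₀] q₀ = α^[ms] a := by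
    rw [Function.iterate_add_apply, hq₀u, huseq]
  have hq₀low : ks + j₀ ≤ ms + 1 := LowBnd q₀ hq₀mem _ _ hq₀eq
  have hq₀min : μ ≤ ms + 1 - (ks + j₀) :=
    hmin _ ⟨q₀, ks + j₀, ms, hq₀mem, hq₀eq, by omega⟩
  have hKμ : (ks + j₀) + μ = ms + 1 := by omega
  -- the rerooted maximal right ray
  set K := ks + j₀ with hKdef
  set x : ℕ → S := fun n => α^[n] q₀ with hxdef
  have hxstep : ∀ n : ℕ, α (x n) = x (n + 1) := by
    intro n
    simp only [hxdef]
    rw [Function.iterate_succ_apply']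
  have hxmem : ∀ n : ℕ, x n ∈ fComponent α a := fun n => fc_iter hq₀mem n
  have hx0 : x 0 ∉ Set.range α := hq₀init
  have KeyBound : ∀ u ∈ fComponent α a, ∀ k n : ℕ, α^[k] u = x n → k ≤ n := by
    intro u hu k n hkn
    have e1 : α^[K + k] u = α^[n + ms] a := by
      rw [Function.iterate_add_apply, hkn]
      simp only [hxdef]
      rw [← Function.iterate_add_apply, Nat.add_comm K n, Function.iterate_add_apply,
        hq₀eq, ← Function.iterate_add_apply]
    have hlow : K + k ≤ n + ms + 1 := LowBnd u hu _ _ e1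
    have hmin' : μ ≤ (n + ms + 1) - (K + k) :=
      hmin _ ⟨u, K + k, n + ms, hu, e1, by omega⟩
    omega
  have hxinj : Function.Injective x := by
    have key : ∀ i j : ℕ, i < j → x i ≠ x j := by
      intro i j hij heq
      have : α^[j - i] (x i) = x j := by
        simp only [hxdef]
        rw [← Function.iterate_add_apply]
        congr 1
        omega
      exact noperB (x i) (hxmem i) (j - i) (by omega) (by rw [this, ← heq])
    intro i j heq
    rcases lt_trichotomy i j with hlt | he | hgt
    · exact absurd heq (key i j hlt)
    · exact he
    · exact absurd heq.symm (key j i hgt)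
  have noCycB : ¬ HasCycleIn α (fComponent α a) := by
    rintro ⟨k, xx, hcyc, hcmem⟩
    exact noperB (xx 0) (hcmem 0 hcyc.1) k hcyc.1 (cycle_periodic hcyc)
  refine ⟨fComponent α a, ⟨⟨a, rfl⟩, ⟨x, ⟨⟨hxinj, hxstep⟩, hx0⟩, hxmem⟩, noCycB, NoDblB⟩,
    x, ⟨⟨hxinj, hxstep⟩, hx0⟩, hxmem, ?_, ?_⟩
  · -- every vertex is on the ray or on a finite branch
    intro u hu
    by_cases hux : u ∈ Set.range x
    · obtain ⟨n, hn⟩ := hux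
      exact Or.inl ⟨n, hn.symm⟩
    · obtain ⟨q, c₀, hqu, hqinit⟩ := InitAnc u hu
      have hqmem : q ∈ fComponent α a := fc_of_iter (by rw [hqu]; exact hu)
      have hreach : ∃ j : ℕ, α^[j] q ∈ Set.range x := by
        obtain ⟨k₃, m₃, h₃⟩ := fc_connect hqmem hq₀mem
        exact ⟨k₃, m₃, h₃.symm⟩
      set M := Nat.find hreach with hMdef
      have hM : α^[M] q ∈ Set.range x := Nat.find_spec hreach
      have hMmin : ∀ j : ℕ, j < M → α^[j] q ∉ Set.range x := fun j hj => Nat.find_min hreach hj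
      have hM1 : 1 ≤ M := by
        rcases Nat.eq_zero_or_pos M with h0 | h1
        · exfalso
          apply hux
          rw [h0] at hM
          obtain ⟨n, hn⟩ := hM
          have hxn : α^[n] q₀ = q := by simpa [hxdef] using hn
          refine ⟨n + c₀, ?_⟩
          simp only [hxdef]
          rw [Nat.add_comm, Function.iterate_add_apply, hxn, hqu]
        · exact h1
      have hc₀M : c₀ ≤ M := by
        by_contra hgt
        push_neg at hgt
        apply hux
        obtain ⟨n, hn⟩ := hM
        have hxn : α^[n] q₀ = α^[M] q := by simpa [hxdef] using hn
        refine ⟨n + (c₀ - M), ?_⟩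
        simp only [hxdef]
        rw [Nat.add_comm, Function.iterate_add_apply, hxn, ← Function.iterate_add_apply,
          show c₀ - M + M = c₀ by omega, hqu]
      have key2 : ∀ i j : ℕ, i < j → α^[i] q ≠ α^[j] q := by
        intro i j hlt heq
        have hj2 : α^[j - i] (α^[i] q) = α^[j] q := by
          rw [← Function.iterate_add_apply]
          congr 1
          omega
        exact noperB (α^[i] q) (fc_iter hqmem i) (j - i) (by omega) (by rw [hj2, ← heq])
      refine Or.inr ⟨M, fun i => α^[i] q, ⟨hM1, ?_, ?_, ?_, hM, ?_⟩, c₀, hc₀M, hqu.symm⟩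
      · intro i _ j _ heq
        rcases lt_trichotomy i j with hlt | he | hgt
        · exact absurd heq (key2 i j hlt)
        · exact he
        · exact absurd heq.symm (key2 j i hgt)
      · intro i _
        simp only []
        rw [Function.iterate_succ_apply']
      · simpa using hqinit
      · exact hMmin (M - 1) (by omega)
  · -- every finite branch ending at `x i` has length at most `i`
    intro i _ m p hbr hpm
    obtain ⟨hm1, hpinj, hch, hp0, hpmT, hpm1⟩ := hbr
    have hchain : α^[m] (p 0) = p m := by
      have := branch_iter (α := α) hch (show 0 + m ≤ m by omega)
      rwa [Nat.zero_add] at this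
    have hp0mem : p 0 ∈ fComponent α a :=
      fc_of_iter (by rw [hchain, hpm]; exact hxmem i)
    exact KeyBound (p 0) hp0mem m i (by rw [hchain, hpm])

end CayleyAux

/-- If `D_α` has a component of type rro, then `α` is a Cayley function iff `D_α`
has a component of type rro which is the join of a maximal right ray `R` and its
finite branches, every finite branch of `R` ending at `x i` having length `≤ i`. -/
theorem isCayley_iff_of_rro {S : Type u} (α : S → S)
    (h : ∃ A : Set S, IsRroComponent α A) :
    IsCayley α ↔
      ∃ A : Set S, IsRroComponent α A ∧ ∃ x : ℕ → S,
        IsMaximalRightRay α x ∧ (∀ n : ℕ, x n ∈ A) ∧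
        (∀ a ∈ A, (∃ n : ℕ, a = x n) ∨
          ∃ (m : ℕ) (p : ℕ → S), IsFiniteBranchOf α (Set.range x) m p ∧ ∃ i ≤ m, a = p i) ∧
        (∀ i : ℕ, 1 ≤ i → ∀ (m : ℕ) (p : ℕ → S),
          IsFiniteBranchOf α (Set.range x) m p → p m = x i → m ≤ i) := by
  constructor
  · intro hC
    exact CayleyAux.forward_dir hC h
  · rintro ⟨A, hrro, x, hray, hmem, hcover, hbnd⟩
    exact CayleyAux.reverse_dir hrro.1 hray hmem hcover hbnd
end

section
/- Let ε, α : S → S with ε idempotent and α ∘ ε = ε ∘ α, let φ be the restriction of α to Fix(ε), let y ∈ Fix(ε) and let k ≥ 1 be minimal with α^k(y) = y. Let A be the component of the functional digraph D_φ containing y and let L = ⋃_{z ∈ A} ε⁻¹({z}). Then for every x ∈ L and every m ≥ 1 with α^m(x) = x, k divides m; in particular, whenever x ∈ L lies on a cycle of D_α, the length of that cycle is a multiple of k. -/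
universe u

/-- The component of the digraph `D_φ` (of the restriction `φ` of `α` to `Fix ε`)
containing the fixed point `y`. -/
def FixComponent {S : Type u} (ε α : S → S) (y : S) : Set S :=
  {z | ε z = z ∧ ∃ a b : ℕ, α^[a] z = α^[b] y}

/-- `A` is a component of `D_φ`, where `φ` is the restriction of `α` to `Fix ε`. -/
def FixIsComponent {S : Type u} (ε α : S → S) (A : Set S) : Prop :=
  ∃ y : S, ε y = y ∧ A = FixComponent ε α y

/-- A cycle of `D_φ`: a cycle of `α` whose vertices are fixed points of `ε`. -/
def FixCycle {S : Type u} (ε α : S → S) (k : ℕ) (x : ℕ → S) : Prop :=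
  IsCycle α k x ∧ ∀ i < k, ε (x i) = x i

/-- A finite branch of length `m ≥ 1` in `D_φ` of the subgraph with vertex set `T`:
all vertices are fixed points of `ε`, `q 0` is an initial vertex of `D_φ`,
`q m ∈ T` and `q (m-1) ∉ T`. -/
def FixBranchOf {S : Type u} (ε α : S → S) (T : Set S) (m : ℕ) (q : ℕ → S) : Prop :=
  1 ≤ m ∧ (∀ i ≤ m, ε (q i) = q i) ∧ (∀ i ≤ m, ∀ j ≤ m, q i = q j → i = j) ∧
    (∀ i < m, α (q i) = q (i + 1)) ∧ (∀ z : S, ε z = z → α z ≠ q 0) ∧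
    q m ∈ T ∧ q (m - 1) ∉ T

/-- An infinite branch in `D_φ` of the subgraph with vertex set `T`:
a left ray of fixed points of `ε` ending in `T`. -/
def FixInfBranchOf {S : Type u} (ε α : S → S) (T : Set S) (y : ℕ → S) : Prop :=
  Function.Injective y ∧ (∀ n : ℕ, ε (y n) = y n) ∧ (∀ n : ℕ, α (y (n + 1)) = y n) ∧
    y 0 ∈ T ∧ y 1 ∉ T

/-- If `y` is a fixed point of `ε` lying on a cycle of `D_α` of length `k`, and `x` lies
in `L = ⋃_{z ∈ A} ε⁻¹({z})` where `A` is the component of `D_φ` containing `y`, then the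
length of any cycle of `D_α` through `x` is a multiple of `k`. -/
theorem cycle_length_dvd_of_mem_L {S : Type u} (ε α : S → S)
    (hε : ε ∘ ε = ε) (hc : α ∘ ε = ε ∘ α)
    (y : S) (hy : ε y = y)
    (k : ℕ) (hk1 : 1 ≤ k) (hky : α^[k] y = y)
    (hkmin : ∀ j : ℕ, 1 ≤ j → α^[j] y = y → k ≤ j)
    (x : S) (hxL : ε x ∈ FixComponent ε α y) :
    ∀ m : ℕ, 1 ≤ m → α^[m] x = x → k ∣ m := by
  obtain ⟨hfix, a, b, hab⟩ := hxL
  intro m hm hmx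
  have hcomm : ∀ n : ℕ, ∀ z : S, α^[n] (ε z) = ε (α^[n] z) := by
    intro n
    induction n with
    | zero => intro z; simp
    | succ n ih =>
      intro z
      have hcz : α (ε z) = ε (α z) := congrFun hc z
      rw [Function.iterate_succ_apply, Function.iterate_succ_apply, hcz, ih (α z)]
  -- ε x is periodic with period m
  have hεm : α^[m] (ε x) = ε x := by rw [hcomm m x, hmx]
  set w := α^[a] (ε x) with hw
  have hwm : α^[m] w = w := by
    rw [hw, ← Function.iterate_add_apply, Nat.add_comm, Function.iterate_add_apply, hεm]
  have hwk : α^[k] w = w := by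
    rw [hab, ← Function.iterate_add_apply, Nat.add_comm,
      Function.iterate_add_apply, hky]
  -- transfer periods of w back to y
  have hy_of_w : ∀ j : ℕ, α^[j] w = w → α^[j] y = y := by
    intro j hj
    have hd : k * (b + 1) - b + b = k * (b + 1) := by
      have : b ≤ k * (b + 1) := by nlinarith
      omega
    have hyk : ∀ c : ℕ, α^[k * c] y = y := by
      intro c
      induction c with
      | zero => simp
      | succ c ih =>
        rw [Nat.mul_succ, Function.iterate_add_apply, hky, ih]
    have hyw : α^[k * (b + 1) - b] w = y := by
      rw [hab, ← Function.iterate_add_apply, hd, hyk (b + 1)]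
    calc α^[j] y = α^[j] (α^[k * (b + 1) - b] w) := by rw [hyw]
      _ = α^[k * (b + 1) - b] (α^[j] w) := by
          rw [← Function.iterate_add_apply, Nat.add_comm, Function.iterate_add_apply]
      _ = y := by rw [hj, hyw]
  -- now k divides m
  have hwq : ∀ c : ℕ, α^[k * c] w = w := by
    intro c
    induction c with
    | zero => simp
    | succ c ih =>
      rw [Nat.mul_succ, Function.iterate_add_apply, hwk, ih]
  have hr : α^[m % k] w = w := by
    have := hwq (m / k)
    have hmk : m % k + k * (m / k) = m := Nat.mod_add_div m k
    calc α^[m % k] w = α^[m % k] (α^[k * (m / k)] w) := by rw [hwq]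
      _ = α^[m] w := by rw [← Function.iterate_add_apply, hmk]
      _ = w := hwm
  rcases Nat.eq_zero_or_pos (m % k) with h0 | hpos
  · omega
  · have := hkmin (m % k) hpos (hy_of_w _ hr)
    have := Nat.mod_lt m (show 0 < k by omega)
    omega
end

section
/- Let ε, α : S → S with ε idempotent and α ∘ ε = ε ∘ α, let φ be the restriction of α to Fix(ε), let y ∈ Fix(ε), let k ≥ 1 be minimal with α^k(y) = y, let A be the component of D_φ containing y, and let L = ⋃_{z ∈ A} ε⁻¹({z}). Assume that for some 0 ≤ i₀ ≤ k−1 the component of D_ε with fixed point α^{i₀}(y) has no branches, i.e., ε⁻¹({α^{i₀}(y)}) = {α^{i₀}(y)}. Then the branches of D_ε over the cycle {y, α(y), …, α^{k−1}(y)} do not induce a cycle in D_α: no element x ∈ L with ε(x) ≠ x satisfies α^m(x) = x for some m ≥ 1. -/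
universe u

/-- If some vertex `α^[i₀] y` of the cycle `{y, α y, …, α^[k-1] y}` of `D_φ` has no
branches in `D_ε`, then no element of `L` outside `Fix ε` lies on a cycle of `D_α`. -/
theorem branches_no_cycle {S : Type u} (ε α : S → S)
    (hε : ε ∘ ε = ε) (hc : α ∘ ε = ε ∘ α)
    (y : S) (hy : ε y = y)
    (k : ℕ) (hk1 : 1 ≤ k) (hky : α^[k] y = y)
    (hkmin : ∀ j : ℕ, 1 ≤ j → α^[j] y = y → k ≤ j)
    (hi : ∃ i₀ : ℕ, i₀ < k ∧ ∀ x : S, ε x = α^[i₀] y → x = α^[i₀] y)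
    (x : S) (hxL : ε x ∈ FixComponent ε α y) (hxnf : ε x ≠ x) :
    ∀ m : ℕ, 1 ≤ m → α^[m] x ≠ x := by
  intro m hm hmx
  apply hxnf
  obtain ⟨i₀, hi₀k, hi₀⟩ := hi
  obtain ⟨_, a, b, hab⟩ := hxL
  have hsc : Function.Semiconj ε α α := fun w => (congrFun hc w).symm
  have hcomm : ∀ n z, ε (α^[n] z) = α^[n] (ε z) := fun n z => hsc.iterate_right n z
  -- ε x is periodic with period m
  have hper : α^[m] (ε x) = ε x := by
    rw [← hcomm m x, hmx]
  have hxm : Function.IsPeriodicPt α m (ε x) := hper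
  have hN : α^[m * a] (ε x) = ε x := hxm.mul_const a
  have hNa : a ≤ m * a := Nat.le_mul_of_pos_left a hm
  -- ε x lies on the cycle of y
  set J := m * a - a + b with hJ
  have hεxJ : ε x = α^[J] y := by
    calc ε x = α^[m * a] (ε x) := hN.symm
    _ = α^[m * a - a + a] (ε x) := by rw [Nat.sub_add_cancel hNa]
    _ = α^[m * a - a] (α^[a] (ε x)) := by rw [Function.iterate_add_apply]
    _ = α^[m * a - a] (α^[b] y) := by rw [hab]
    _ = α^[J] y := by rw [hJ, Function.iterate_add_apply]
  have hyk : Function.IsPeriodicPt α k y := hky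
  -- choose t with t + J = i₀ + (J+1)*k
  have hJk : J ≤ (J + 1) * k := le_trans (Nat.le_succ J) (Nat.le_mul_of_pos_right (J+1) hk1)
  set t := i₀ + (J + 1) * k - J with ht
  have htJ : t + J = i₀ + (J + 1) * k := by omega
  have hcyc : α^[t + J] y = α^[i₀] y := by
    rw [htJ, Function.iterate_add_apply, hyk.const_mul (J + 1)]
  have hεt : ε (α^[t] x) = α^[i₀] y := by
    rw [hcomm t x, hεxJ, ← Function.iterate_add_apply, hcyc]
  have hxt : α^[t] x = α^[i₀] y := hi₀ _ hεt
  have hfix : ε (α^[t] x) = α^[t] x := by rw [hεt, hxt]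
  -- pull back along the cycle of x
  have hxm' : Function.IsPeriodicPt α m x := hmx
  have hM : α^[m * (t + 1)] x = x := hxm'.mul_const (t + 1)
  have hMt : t ≤ m * (t + 1) := by nlinarith
  calc ε x = ε (α^[m * (t + 1)] x) := by rw [hM]
  _ = ε (α^[m * (t + 1) - t] (α^[t] x)) := by
      rw [← Function.iterate_add_apply, Nat.sub_add_cancel hMt]
  _ = α^[m * (t + 1) - t] (ε (α^[t] x)) := hcomm _ _
  _ = α^[m * (t + 1) - t] (α^[t] x) := by rw [hfix]
  _ = α^[m * (t + 1) - t + t] x := by rw [Function.iterate_add_apply]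
  _ = x := by rw [Nat.sub_add_cancel hMt, hM]
end

section
/- Let ε, α : S → S with ε idempotent and α ∘ ε = ε ∘ α, let φ be the restriction of α to Fix(ε), let y ∈ Fix(ε), let k ≥ 1 be minimal with α^k(y) = y, let A be the component of D_φ containing y, and let L = ⋃_{z ∈ A} ε⁻¹({z}). Assume that ε⁻¹({α^{i₀}(y)}) = {α^{i₀}(y)} for some 0 ≤ i₀ ≤ k−1, and that A has no branches in D_φ (so A consists exactly of the cycle {y, α(y), …, α^{k−1}(y)}). Then every finite branch in the functional digraph of the restriction of α to L has length l with 0 ≤ l ≤ k−1. -/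
universe u

/-- A finite branch of a cycle in the functional digraph of the restriction of `α`
to the invariant set `L`: a chain in `L` from an initial vertex of the restricted
digraph to a vertex on a cycle, whose second-to-last vertex is not on that cycle. -/
def RestrictedCycleBranch {S : Type u} (α : S → S) (L : Set S) (m : ℕ) (p : ℕ → S) : Prop :=
  1 ≤ m ∧ (∀ i ≤ m, p i ∈ L) ∧ (∀ i ≤ m, ∀ j ≤ m, p i = p j → i = j) ∧
    (∀ i < m, α (p i) = p (i + 1)) ∧ (∀ x ∈ L, α x ≠ p 0) ∧
    (∃ c : ℕ, 1 ≤ c ∧ α^[c] (p m) = p m) ∧ ∀ j : ℕ, p (m - 1) ≠ α^[j] (p m)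


/-- If some vertex of the cycle of `A` has no branches in `D_ε` and `A` itself has no
branches in `D_φ`, then every finite branch of the restriction of `α` to
`L = ⋃_{z ∈ A} ε⁻¹({z})` has length at most `k - 1`. -/
theorem branch_length_le_of_no_phi_branches {S : Type u} (ε α : S → S)
    (hε : ε ∘ ε = ε) (hc : α ∘ ε = ε ∘ α)
    (y : S) (hy : ε y = y)
    (k : ℕ) (hk1 : 1 ≤ k) (hky : α^[k] y = y)
    (hkmin : ∀ j : ℕ, 1 ≤ j → α^[j] y = y → k ≤ j)
    (hi : ∃ i₀ : ℕ, i₀ < k ∧ ∀ x : S, ε x = α^[i₀] y → x = α^[i₀] y)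
    (hnb : ∀ z ∈ FixComponent ε α y, ∃ i : ℕ, i < k ∧ z = α^[i] y) :
    ∀ (m : ℕ) (p : ℕ → S),
      RestrictedCycleBranch α {x : S | ε x ∈ FixComponent ε α y} m p → m ≤ k - 1 := by
  intro m p hp
  by_contra hm
  have hkm : k ≤ m := by omega
  obtain ⟨hm1, hL, hinj, hchain, hinit, ⟨c, hc1, hcper⟩, hnot⟩ := hp
  -- commutation of ε with iterates of α
  have hcom1 : ∀ z : S, ε (α z) = α (ε z) := fun z => (congrFun hc z).symm
  have hcom : ∀ (n : ℕ) (z : S), ε (α^[n] z) = α^[n] (ε z) := by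
    intro n
    induction n with
    | zero => intro z; simp
    | succ n ih =>
      intro z
      rw [Function.iterate_succ_apply', Function.iterate_succ_apply', hcom1, ih]
  -- chain: iterating α along the branch
  have chain : ∀ i j : ℕ, i + j ≤ m → α^[j] (p i) = p (i + j) := by
    intro i j
    induction j with
    | zero => intro _; simp
    | succ n ih =>
      intro h
      rw [Function.iterate_succ_apply', ih (by omega), hchain (i + n) (by omega), Nat.add_assoc]
  -- y is periodic with period k, so α^[k] fixes each α^[i] y
  have hfixiter : ∀ i : ℕ, α^[k] (α^[i] y) = α^[i] y := by
    intro i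
    rw [← Function.iterate_add_apply, Nat.add_comm, Function.iterate_add_apply, hky]
  obtain ⟨i₀, hi₀k, hi₀⟩ := hi
  -- ε (p (m - k)) is in the component, hence on the cycle
  have hmem : ε (p (m - k)) ∈ FixComponent ε α y := hL (m - k) (by omega)
  obtain ⟨j, hjk, hj⟩ := hnb _ hmem
  -- choose s < k so that ε (p (m - k + s)) = α^[i₀] y
  set s : ℕ := if j ≤ i₀ then i₀ - j else i₀ + k - j with hs
  have hsk : s < k := by
    simp only [hs]; split <;> omega
  have hjs : α^[j + s] y = α^[i₀] y := by
    simp only [hs]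
    split
    · next h => congr 1; omega
    · next h =>
      have : j + (i₀ + k - j) = i₀ + k := by omega
      rw [this, Nat.add_comm i₀ k, Function.iterate_add_apply, hfixiter]
  set i' : ℕ := m - k + s with hi'
  have hi'm : i' ≤ m - 1 := by omega
  have heps : ε (p i') = α^[i₀] y := by
    have h1 : α^[s] (p (m - k)) = p i' := chain (m - k) s (by omega)
    rw [← h1, hcom, hj, ← Function.iterate_add_apply, Nat.add_comm s j, hjs]
  have hpi' : p i' = α^[i₀] y := hi₀ _ heps
  have hper : α^[k] (p i') = p i' := by rw [hpi']; exact hfixiter i₀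
  have hperm : ∀ t : ℕ, α^[k * t] (p i') = p i' := by
    intro t
    induction t with
    | zero => simp
    | succ n ih =>
      rw [Nat.mul_succ, Function.iterate_add_apply, hper, ih]
  have hpm : α^[m - i'] (p i') = p m := by
    have := chain i' (m - i') (by omega)
    rwa [show i' + (m - i') = m by omega] at this
  have hpm1 : α^[m - 1 - i'] (p i') = p (m - 1) := by
    have := chain i' (m - 1 - i') (by omega)
    rwa [show i' + (m - 1 - i') = m - 1 by omega] at this
  apply hnot (k * m - 1)
  rw [← hpm, ← Function.iterate_add_apply,
    show k * m - 1 + (m - i') = (m - 1 - i') + k * m by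
      have hkm1 : 1 ≤ k * m := Nat.one_le_iff_ne_zero.mpr (by positivity)
      omega,
    Function.iterate_add_apply, hperm, hpm1]
end

section
/- Let S be an infinite set, ε : S → S idempotent, α : S → S with α ∘ ε = ε ∘ α, and let φ be the restriction of α to Fix(ε). Suppose the functional digraph D_φ has a component of type rro such that: (1) it is the join of a maximal right ray R = [x_0 x_1 x_2 …⟩ and its finite branches, i.e., every vertex of the component lies on R or on a finite branch of R; and (2) for every i ≥ 1, every finite branch [y_0 y_1 … y_m = x_i] of R ending at x_i has length m ≤ i. Then α is a Cayley function. -/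
universe u

/-- A maximal right ray in `D_φ`: an injective forward orbit of fixed points of `ε`
starting at an initial vertex of `D_φ`. -/
def FixMaxRightRay {S : Type u} (ε α : S → S) (x : ℕ → S) : Prop :=
  Function.Injective x ∧ (∀ n : ℕ, ε (x n) = x n) ∧ (∀ n : ℕ, α (x n) = x (n + 1)) ∧
    ∀ z : S, ε z = z → α z ≠ x 0

/-- `A` contains a cycle of `D_φ`. -/
def FixHasCycleIn {S : Type u} (ε α : S → S) (A : Set S) : Prop :=
  ∃ k x, FixCycle ε α k x ∧ ∀ i < k, x i ∈ A

/-- `A` contains a double ray of `D_φ`. -/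
def FixHasDoubleRayIn {S : Type u} (ε α : S → S) (A : Set S) : Prop :=
  ∃ w : ℤ → S, Function.Injective w ∧ (∀ n : ℤ, ε (w n) = w n) ∧
    (∀ n : ℤ, α (w n) = w (n + 1)) ∧ ∀ n : ℤ, w n ∈ A

open Classical in
/-- Auxiliary grading: `grad α x a = n + 1 - d` for a pair `(d, n)` with
`α^[d] a = x n` and `d ≤ n`, if one exists; else `0`. -/
noncomputable def grad {S : Type u} (α : S → S) (x : ℕ → S) (a : S) : ℕ :=
  if h : ∃ p : ℕ × ℕ, α^[p.1] a = x p.2 ∧ p.1 ≤ p.2 then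
    (Classical.choose h).2 + 1 - (Classical.choose h).1 else 0

lemma ray_iterate {S : Type u} {α : S → S} {x : ℕ → S}
    (hstep : ∀ n : ℕ, α (x n) = x (n + 1)) :
    ∀ t n : ℕ, α^[t] (x n) = x (n + t) := by
  intro t
  induction t with
  | zero => intro n; simp
  | succ t ih =>
    intro n
    rw [Function.iterate_succ_apply, hstep n, ih (n + 1)]
    congr 1; omega

lemma grad_eq {S : Type u} {α : S → S} {x : ℕ → S}
    (hinj : Function.Injective x) (hstep : ∀ n : ℕ, α (x n) = x (n + 1))
    {a : S} {d n : ℕ} (h : α^[d] a = x n) (hdn : d ≤ n) :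
    grad α x a = n + 1 - d := by
  have hex : ∃ p : ℕ × ℕ, α^[p.1] a = x p.2 ∧ p.1 ≤ p.2 := ⟨(d, n), h, hdn⟩
  rw [grad, dif_pos hex]
  obtain ⟨h1, h2⟩ := Classical.choose_spec hex
  set p := Classical.choose hex with hp
  rcases le_total d p.1 with hle | hle
  · have key : α^[p.1] a = x (n + (p.1 - d)) := by
      rw [show p.1 = (p.1 - d) + d by omega, Function.iterate_add_apply, h,
        ray_iterate hstep]
      congr 1; omega
    have := hinj (h1.symm.trans key)
    omega
  · have key : α^[d] a = x (p.2 + (d - p.1)) := by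
      rw [show d = (d - p.1) + p.1 by omega, Function.iterate_add_apply, h1,
        ray_iterate hstep]
      congr 1; omega
    have := hinj (h.symm.trans key)
    omega

/-- The core semigroup construction: if `A` is forward-closed, backward-closed
(among fixed points) set of fixed points of `ε`, and `f` is a grading on `A`
increasing by 1 along `α`, with a base element of grade 1, then `α` is Cayley. -/
lemma cayley_core {S : Type u} (ε α : S → S)
    (hε : ∀ z, ε (ε z) = ε z) (hc : ∀ z, α (ε z) = ε (α z))
    (A : Set S) (f : S → ℕ)
    (hAfix : ∀ z ∈ A, ε z = z)
    (hfwd : ∀ z ∈ A, α z ∈ A)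
    (hback : ∀ z, ε z = z → α z ∈ A → z ∈ A)
    (hgrad : ∀ z ∈ A, f (α z) = f z + 1)
    (a : S) (haA : ε a ∈ A) (hfa : f (ε a) = 1) :
    IsCayley α := by
  classical
  have hck : ∀ k : ℕ, ∀ z, ε (α^[k] z) = α^[k] (ε z) := by
    intro k
    induction k with
    | zero => intro z; rfl
    | succ k ih =>
      intro z
      rw [Function.iterate_succ_apply', Function.iterate_succ_apply', ← hc, ih]
  have hfwdk : ∀ k : ℕ, ∀ z ∈ A, α^[k] z ∈ A := by
    intro k
    induction k with
    | zero => exact fun z hz => hz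
    | succ k ih =>
      intro z hz
      rw [Function.iterate_succ_apply']
      exact hfwd _ (ih z hz)
  have hgradk : ∀ k : ℕ, ∀ z ∈ A, f (α^[k] z) = f z + k := by
    intro k
    induction k with
    | zero => intro z _; simp
    | succ k ih =>
      intro z hz
      rw [Function.iterate_succ_apply', hgrad _ (hfwdk k z hz), ih z hz]
      omega
  have hbackk : ∀ k : ℕ, ∀ z, ε z = z → α^[k] z ∈ A → z ∈ A := by
    intro k
    induction k with
    | zero => exact fun z _ h => h
    | succ k ih =>
      intro z hz h
      rw [Function.iterate_succ_apply] at h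
      exact hback z hz (ih (α z) (by rw [← hc z, hz]) h)
  refine ⟨fun u v => if ε u ∈ A then α^[f (ε u)] v else ε u, ?_, a, ?_⟩
  · intro u v w
    by_cases hu : ε u ∈ A
    · by_cases hv : ε v ∈ A
      · -- both good
        have h1 : ε (α^[f (ε u)] v) = α^[f (ε u)] (ε v) := hck _ v
        have h2 : α^[f (ε u)] (ε v) ∈ A := hfwdk _ _ hv
        have h3 : f (ε (α^[f (ε u)] v)) = f (ε v) + f (ε u) := by
          rw [h1]; exact hgradk _ _ hv
        simp only [if_pos hu, if_pos hv]
        rw [if_pos (h1 ▸ h2 : ε (α^[f (ε u)] v) ∈ A), h3,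
          ← Function.iterate_add_apply]
        congr 1; omega
      · -- u good, v bad
        have h1 : ε (α^[f (ε u)] v) = α^[f (ε u)] (ε v) := hck _ v
        have h2 : α^[f (ε u)] (ε v) ∉ A := fun hmem =>
          hv (hbackk _ _ (hε v) hmem)
        simp only [if_pos hu, if_neg hv]
        rw [if_neg (fun hmem => h2 (h1 ▸ hmem)), h1]
    · -- u bad
      have h1 : ε (ε u) ∉ A := by rw [hε u]; exact hu
      simp only [if_neg hu, if_neg h1, hε u]
  · intro z
    simp only [if_pos haA, hfa, Function.iterate_one]

/-- If `S` is infinite, `ε` is idempotent, `α` commutes with `ε`, and `D_φ` has a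
component of type rro which is the join of a maximal right ray `R` and its finite
branches, each branch of `R` ending at `x i` having length `≤ i`, then `α` is a
Cayley function. -/
theorem isCayley_of_fix_rro {S : Type u} [Infinite S] (ε α : S → S)
    (hε : ε ∘ ε = ε) (hc : α ∘ ε = ε ∘ α)
    (A : Set S) (hA : FixIsComponent ε α A)
    (hnc : ¬ FixHasCycleIn ε α A) (hnd : ¬ FixHasDoubleRayIn ε α A)
    (x : ℕ → S) (hx : FixMaxRightRay ε α x) (hxA : ∀ n : ℕ, x n ∈ A)
    (hjoin : ∀ a ∈ A, (∃ n : ℕ, a = x n) ∨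
      ∃ (m : ℕ) (q : ℕ → S), FixBranchOf ε α (Set.range x) m q ∧ ∃ i ≤ m, a = q i)
    (hlen : ∀ i : ℕ, 1 ≤ i → ∀ (m : ℕ) (q : ℕ → S),
      FixBranchOf ε α (Set.range x) m q → q m = x i → m ≤ i) :
    IsCayley α := by
  classical
  obtain ⟨y, hy, hAeq⟩ := hA
  obtain ⟨hinj, hfix, hstep, hinit⟩ := hx
  have hεp : ∀ z, ε (ε z) = ε z := fun z => congrFun hε z
  have hcp : ∀ z, α (ε z) = ε (α z) := fun z => congrFun hc z
  -- membership in A unfolded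
  have hmem : ∀ z, z ∈ A ↔ (ε z = z ∧ ∃ a b : ℕ, α^[a] z = α^[b] y) := by
    intro z; rw [hAeq]; exact Iff.rfl
  have hAfix : ∀ z ∈ A, ε z = z := fun z hz => ((hmem z).1 hz).1
  have hfwd : ∀ z ∈ A, α z ∈ A := by
    intro z hz
    obtain ⟨hzf, a', b', hab⟩ := (hmem z).1 hz
    refine (hmem (α z)).2 ⟨by rw [← hcp z, hzf], a', b' + 1, ?_⟩
    calc α^[a'] (α z) = α^[a' + 1] z := (Function.iterate_succ_apply α a' z).symm
      _ = α (α^[a'] z) := Function.iterate_succ_apply' α a' z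
      _ = α (α^[b'] y) := by rw [hab]
      _ = α^[b' + 1] y := (Function.iterate_succ_apply' α b' y).symm
  have hback : ∀ z, ε z = z → α z ∈ A → z ∈ A := by
    intro z hzf hz
    obtain ⟨_, a', b', hab⟩ := (hmem (α z)).1 hz
    exact (hmem z).2 ⟨hzf, a' + 1, b', by
      rw [Function.iterate_succ_apply]; exact hab⟩
  -- chains along branches
  have hchain : ∀ (m : ℕ) (q : ℕ → S), (∀ i < m, α (q i) = q (i + 1)) →
      ∀ t j, j + t ≤ m → α^[t] (q j) = q (j + t) := by
    intro m q hq t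
    induction t with
    | zero => intro j _; simp
    | succ t ih =>
      intro j h
      rw [Function.iterate_succ_apply, hq j (by omega), ih (j + 1) (by omega)]
      congr 1; omega
  -- existence of grading pairs
  have exA : ∀ a ∈ A, ∃ d n : ℕ, α^[d] a = x n ∧ d ≤ n := by
    intro a ha
    rcases hjoin a ha with ⟨n, rfl⟩ | ⟨m, q, hq, i, him, rfl⟩
    · exact ⟨0, n, rfl, n.zero_le⟩
    · obtain ⟨hm1, hqfix, hqinj, hqstep, hqinit, hqm, hqm1⟩ := hq
      obtain ⟨i₀, hi₀⟩ := hqm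
      have hch : α^[m - i] (q i) = q m := by
        rw [hchain m q hqstep (m - i) i (by omega)]; congr 1; omega
      have hi₀1 : 1 ≤ i₀ := by
        by_contra h0
        have hi₀0 : i₀ = 0 := by omega
        have hm' : m - 1 + 1 = m := by omega
        have : α (q (m - 1)) = x 0 := by
          rw [hqstep (m - 1) (by omega), hm', ← hi₀, hi₀0]
        exact hinit (q (m - 1)) (hqfix (m - 1) (by omega)) this
      have hmi₀ : m ≤ i₀ := hlen i₀ hi₀1 m q
        ⟨hm1, hqfix, hqinj, hqstep, hqinit, ⟨i₀, hi₀⟩, hqm1⟩ hi₀.symm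
      exact ⟨m - i, i₀, by rw [hch, ← hi₀], by omega⟩
  set f : S → ℕ := grad α x with hf
  have hgrad : ∀ z ∈ A, f (α z) = f z + 1 := by
    intro z hz
    obtain ⟨d, n, h, hdn⟩ := exA z hz
    have h' : α^[d] (α z) = x (n + 1) := by
      calc α^[d] (α z) = α^[d + 1] z := (Function.iterate_succ_apply α d z).symm
        _ = α (α^[d] z) := Function.iterate_succ_apply' α d z
        _ = α (x n) := by rw [h]
        _ = x (n + 1) := hstep n
    rw [hf, grad_eq hinj hstep h' (by omega), grad_eq hinj hstep h hdn]
    omega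
  have hx0A : ε (x 0) ∈ A := by rw [hfix 0]; exact hxA 0
  have hfx0 : f (ε (x 0)) = 1 := by
    rw [hfix 0, hf, grad_eq hinj hstep (show α^[0] (x 0) = x 0 from rfl) le_rfl]
  exact cayley_core ε α hεp hcp A f hAfix hfwd hback hgrad (x 0) hx0A hfx0
end

section
/- Let α : S → S have stabilizer s. Then α^s(x) ∈ sim(α) for every x ∈ S, and s is the smallest integer with this property: if s > 0, then there exists x ∈ S with α^{s−1}(x) ∉ sim(α). -/
universe u

/-- If `α` has stabilizer `s`, then `α^[s] x ∈ sim α` for every `x`, and `s` is the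
smallest such integer: if `s > 0`, some `x` has `α^[s-1] x ∉ sim α`. -/
theorem stabilizer_iterate_mem_stableImage {S : Type u} (α : S → S) (s : ℕ)
    (h : HasStabilizer α s) :
    (∀ x : S, α^[s] x ∈ stableImage α) ∧
      (0 < s → ∃ x : S, α^[s - 1] x ∉ stableImage α) := by
  have hsub : ∀ n m : ℕ, n ≤ m → Set.range (α^[m]) ⊆ Set.range (α^[n]) := by
    intro n m hnm y hy
    obtain ⟨x, rfl⟩ := hy
    obtain ⟨k, rfl⟩ := Nat.exists_eq_add_of_le hnm
    exact ⟨α^[k] x, by rw [← Function.iterate_add_apply]⟩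
  have hstab : ∀ k : ℕ, Set.range (α^[s + k]) = Set.range (α^[s]) := by
    intro k
    induction k with
    | zero => rfl
    | succ k ih =>
      have e1 : s + (k + 1) = k + (s + 1) := by omega
      have e2 : s + k = k + s := by omega
      rw [e1, Function.iterate_add, Set.range_comp, ← h.1, ← Set.range_comp,
        ← Function.iterate_add, ← e2, ih]
  have hmem : ∀ n : ℕ, Set.range (α^[s]) ⊆ Set.range (α^[n]) := by
    intro n
    rcases le_or_gt n s with hn | hn
    · exact hsub n s hn
    · have : s + (n - s) = n := by omega
      rw [← this, hstab]
  constructor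
  · intro x n
    exact hmem n ⟨x, rfl⟩
  · intro hs
    by_contra hcon
    push_neg at hcon
    apply h.2 (s - 1) (by omega)
    have hsucc : s - 1 + 1 = s := by omega
    apply Set.Subset.antisymm _ (hsub (s - 1) (s - 1 + 1) (by omega))
    intro y hy
    obtain ⟨x, rfl⟩ := hy
    rw [hsucc]
    exact hcon x s
end
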